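/- arXiv:1512.06547 — 5 statements merged into one kernel-verified Lean document; each statement's English description precedes it below -/
import Mathlib

section
/- Let k be a positive integer, Λ a finitely aligned k-graph, R a commutative ring with 1, A an R-algebra, and {S_λ, S_{μ*} : λ, μ ∈ Λ} a family in A satisfying (KP1), (KP2) and (KP3). Then for all λ, μ ∈ Λ one has S_λ S_{λ*} S_μ S_{μ*} = Σ_{λρ ∈ MCE(λ,μ)} S_{λρ} S_{(λρ)*}, and consequently the elements {S_λ S_{λ*} : λ ∈ Λ} pairwise commute. -/
/-- A higher-rank graph (`k`-graph): a countable small category together with a degree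
functor `d` into `ℕᵏ` satisfying the unique factorisation property.  The morphisms form the
type `Path`; the objects (vertices) are identified with the identity paths via `vertex`.
Composition `comp p q` is only meaningful when `src p = rng q`; all axioms are stated under
this compatibility assumption. -/
structure KGraph (k : ℕ) where
  Obj : Type
  Path : Type
  countable_obj : Countable Obj
  countable_path : Countable Path
  src : Path → Obj
  rng : Path → Obj
  vertex : Obj → Path
  comp : Path → Path → Path
  deg : Path → Fin k → ℕ
  src_vertex : ∀ v, src (vertex v) = v
  rng_vertex : ∀ v, rng (vertex v) = v
  deg_vertex : ∀ v, deg (vertex v) = 0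
  vertex_comp : ∀ p, comp (vertex (rng p)) p = p
  comp_vertex : ∀ p, comp p (vertex (src p)) = p
  src_comp : ∀ p q, src p = rng q → src (comp p q) = src q
  rng_comp : ∀ p q, src p = rng q → rng (comp p q) = rng p
  deg_comp : ∀ p q, src p = rng q → deg (comp p q) = deg p + deg q
  comp_assoc : ∀ p q r, src p = rng q → src q = rng r →
    comp (comp p q) r = comp p (comp q r)
  factorisation : ∀ (p : Path) (m n : Fin k → ℕ), deg p = m + n →
    ∃! x : Path × Path, src x.1 = rng x.2 ∧ deg x.1 = m ∧ deg x.2 = n ∧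
      comp x.1 x.2 = p

namespace KGraph

variable {k : ℕ} (Λ : KGraph k)

/-- `Λ^min(p,q)`: the pairs `(ρ,τ)` with `pρ = qτ` a minimal common extension of `p` and `q`. -/
def minPairs (p q : Λ.Path) : Set (Λ.Path × Λ.Path) :=
  {x | Λ.src p = Λ.rng x.1 ∧ Λ.src q = Λ.rng x.2 ∧
    Λ.comp p x.1 = Λ.comp q x.2 ∧
    Λ.deg (Λ.comp p x.1) = Λ.deg p ⊔ Λ.deg q}

/-- `MCE(p,q)`: minimal common extensions of `p` and `q`. -/
def MCE (p q : Λ.Path) : Set Λ.Path :=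
  {t | Λ.deg t = Λ.deg p ⊔ Λ.deg q ∧
    (∃ r, Λ.src p = Λ.rng r ∧ Λ.comp p r = t) ∧
    (∃ r, Λ.src q = Λ.rng r ∧ Λ.comp q r = t)}

/-- `Λ` is finitely aligned if all the sets `Λ^min(p,q)` are finite. -/
def FinitelyAligned : Prop := ∀ p q, (Λ.minPairs p q).Finite

/-- `E ⊆ vΛ` is exhaustive. -/
def Exhaustive (v : Λ.Obj) (E : Set Λ.Path) : Prop :=
  ∀ p, Λ.rng p = v → ∃ q ∈ E, (Λ.minPairs p q).Nonempty

/-- `E` is a finite exhaustive subset of `vΛ \ {v}`, i.e. an element of `FE(Λ)`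
with range vertex `v`. -/
def FE (v : Λ.Obj) (E : Set Λ.Path) : Prop :=
  E.Finite ∧ (∀ p ∈ E, Λ.rng p = v ∧ p ≠ Λ.vertex v) ∧ Λ.Exhaustive v E

/-- `Ext(p; E)`. -/
def extSet (p : Λ.Path) (E : Set Λ.Path) : Set Λ.Path :=
  ⋃ q ∈ E, {r | ∃ t, (r, t) ∈ Λ.minPairs p q}

section Family

variable {A : Type} [NonUnitalRing A]

/-- (KP1): the vertex elements are mutually orthogonal idempotents. -/
def KP1 (S : Λ.Path → A) : Prop :=
  (∀ v, S (Λ.vertex v) * S (Λ.vertex v) = S (Λ.vertex v)) ∧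
  ∀ v w, v ≠ w → S (Λ.vertex v) * S (Λ.vertex w) = 0

/-- (KP2): multiplicativity on composable paths and ghost paths.  Here `T μ` plays the
role of `S_{μ*}`. -/
def KP2 (S T : Λ.Path → A) : Prop :=
  ∀ p q, Λ.src p = Λ.rng q →
    S p * S q = S (Λ.comp p q) ∧ T q * T p = T (Λ.comp p q)

/-- (KP3): `S_{p*} S_q = ∑_{(ρ,τ) ∈ Λ^min(p,q)} S_ρ S_{τ*}` (empty sum read as `0`). -/
def KP3 (S T : Λ.Path → A) : Prop :=
  ∀ p q, T p * S q = ∑ᶠ x ∈ Λ.minPairs p q, S x.1 * T x.2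

/-- (KP4): `∏_{p ∈ E} (S_v - S_p S_{p*}) = 0` for every finite exhaustive
`E ⊆ vΛ \ {v}`.  The product is implemented as a fold over any duplicate-free list
enumerating `E`, with the harmless extra idempotent factor `S_v` in front. -/
def KP4 (S T : Λ.Path → A) : Prop :=
  ∀ (v : Λ.Obj) (l : List Λ.Path), l.Nodup → Λ.FE v {p | p ∈ l} →
    (l.map fun p => S (Λ.vertex v) - S p * T p).foldl (· * ·) (S (Λ.vertex v)) = 0

/-- A Kumjian–Pask `Λ`-family in a (not necessarily unital) ring: `S p` represents `s_p`
and `T p` represents the ghost element `s_{p*}`, with `T` and `S` agreeing on vertices. -/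
def IsKPFamily (S T : Λ.Path → A) : Prop :=
  (∀ v, T (Λ.vertex v) = S (Λ.vertex v)) ∧
  Λ.KP1 S ∧ Λ.KP2 S T ∧ Λ.KP3 S T ∧ Λ.KP4 S T

end Family

/-- `(B, s, t)` is *the* (universal) Kumjian–Pask algebra of `Λ` over `R`:
`(s, t)` is a Kumjian–Pask `Λ`-family generating `B`, and every Kumjian–Pask `Λ`-family
in an `R`-algebra `A` factors uniquely through it. -/
def IsUniversalKP (R : Type) [CommRing R] (B : Type) [NonUnitalRing B]
    [Module R B] [SMulCommClass R B B] [IsScalarTower R B B]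
    (s t : Λ.Path → B) : Prop :=
  Λ.IsKPFamily s t ∧
  NonUnitalAlgebra.adjoin R (Set.range s ∪ Set.range t) = ⊤ ∧
  ∀ (A : Type) [NonUnitalRing A] [Module R A] [SMulCommClass R A A]
    [IsScalarTower R A A] (S T : Λ.Path → A), Λ.IsKPFamily S T →
      ∃! π : B →ₙₐ[R] A, (∀ p, π (s p) = S p) ∧ (∀ p, π (t p) = T p)

/-- A boundary path of `Λ`: a degree-preserving functor `x : Ω_{k,m} → Λ`
(for `m = deg x ∈ (ℕ∪{∞})ᵏ`), recorded via its segments `seg p q = x(p,q)`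
for `p ≤ q ≤ m` (the value of `seg` outside this domain is junk), and satisfying
the boundary-path condition with respect to finite exhaustive sets. -/
structure BoundaryPath (Λ : KGraph k) where
  deg : Fin k → ℕ∞
  seg : (Fin k → ℕ) → (Fin k → ℕ) → Λ.Path
  deg_seg : ∀ p q, p ≤ q → (∀ i, (q i : ℕ∞) ≤ deg i) → Λ.deg (seg p q) = q - p
  seg_self : ∀ p, (∀ i, (p i : ℕ∞) ≤ deg i) →
    seg p p = Λ.vertex (Λ.src (seg p p))
  src_seg : ∀ p q r, p ≤ q → q ≤ r → (∀ i, (r i : ℕ∞) ≤ deg i) →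
    Λ.src (seg p q) = Λ.rng (seg q r)
  comp_seg : ∀ p q r, p ≤ q → q ≤ r → (∀ i, (r i : ℕ∞) ≤ deg i) →
    Λ.comp (seg p q) (seg q r) = seg p r
  boundary : ∀ n : Fin k → ℕ, (∀ i, (n i : ℕ∞) ≤ deg i) →
    ∀ E : Set Λ.Path, Λ.FE (Λ.src (seg n n)) E →
      ∃ p ∈ E, (∀ i, ((n + Λ.deg p) i : ℕ∞) ≤ deg i) ∧ seg n (n + Λ.deg p) = p

namespace BoundaryPath

variable {Λ : KGraph k}

/-- The vertex `x(n)` of a boundary path. -/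
def vtx (x : Λ.BoundaryPath) (n : Fin k → ℕ) : Λ.Obj := Λ.src (x.seg n n)

/-- The range `r(x) = x(0)` of a boundary path. -/
def rng (x : Λ.BoundaryPath) : Λ.Obj := x.vtx 0

end BoundaryPath

/-- `IsShift n x y` says that `y = σⁿ x` is the shift of the boundary path `x` by
`n ≤ d(x)`. -/
def IsShift (n : Fin k → ℕ) (x y : Λ.BoundaryPath) : Prop :=
  (∀ i, (n i : ℕ∞) ≤ x.deg i) ∧
  (∀ i, y.deg i = x.deg i - (n i : ℕ∞)) ∧
  ∀ p q, p ≤ q → (∀ i, (q i : ℕ∞) ≤ y.deg i) → y.seg p q = x.seg (n + p) (n + q)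

/-- `IsConcat p x y` says that `y = p·x` is the concatenation of the path `p` with the
boundary path `x` (so `y(0, d p) = p` and `σ^{d p} y = x`). -/
def IsConcat (p : Λ.Path) (x y : Λ.BoundaryPath) : Prop :=
  Λ.IsShift (Λ.deg p) y x ∧ y.seg 0 (Λ.deg p) = p

/-- A boundary path `x` is aperiodic if distinct paths with source `r(x)` give distinct
concatenations `p·x ≠ q·x`. -/
def AperiodicBP (x : Λ.BoundaryPath) : Prop :=
  ∀ p q, Λ.src p = x.rng → Λ.src q = x.rng → p ≠ q →
    ∀ y, Λ.IsConcat p x y → ¬Λ.IsConcat q x y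

/-- `Λ` is aperiodic: every vertex receives an aperiodic boundary path. -/
def Aperiodic : Prop :=
  ∀ v : Λ.Obj, ∃ x : Λ.BoundaryPath, x.rng = v ∧ Λ.AperiodicBP x

/-- `Λ` is cofinal: for every vertex `v` and boundary path `x` there is `n ≤ d(x)`
with `vΛx(n) ≠ ∅`. -/
def Cofinal : Prop :=
  ∀ (v : Λ.Obj) (x : Λ.BoundaryPath), ∃ n : Fin k → ℕ,
    (∀ i, (n i : ℕ∞) ≤ x.deg i) ∧ ∃ p, Λ.rng p = v ∧ Λ.src p = x.vtx n

/-- The boundary-path groupoid `G_Λ` as a set of triples `(x, m, y)` with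
`σᵖ x = σ^q y` and `m = p - q`. -/
def BPG : Set (Λ.BoundaryPath × (Fin k → ℤ) × Λ.BoundaryPath) :=
  {a | ∃ (p q : Fin k → ℕ) (z : Λ.BoundaryPath),
    (fun i => (p i : ℤ) - (q i : ℤ)) = a.2.1 ∧
    Λ.IsShift p a.1 z ∧ Λ.IsShift q a.2.2 z}

/-- `Z(p) = p ∂Λ`, the cylinder set of boundary paths with prefix `p`. -/
def ZC (p : Λ.Path) : Set Λ.BoundaryPath := {x | ∃ z, Λ.IsConcat p z x}

/-- `Z(p *ₛ q)`. -/
def ZP (p q : Λ.Path) : Set (Λ.BoundaryPath × (Fin k → ℤ) × Λ.BoundaryPath) :=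
  {a | a.2.1 = (fun i => (Λ.deg p i : ℤ) - (Λ.deg q i : ℤ)) ∧
    a.1 ∈ Λ.ZC p ∧ a.2.2 ∈ Λ.ZC q ∧
    ∃ z, Λ.IsShift (Λ.deg p) a.1 z ∧ Λ.IsShift (Λ.deg q) a.2.2 z}

/-- `Z(p *ₛ q \ G)`. -/
def ZPD (p q : Λ.Path) (G : Set Λ.Path) :
    Set (Λ.BoundaryPath × (Fin k → ℤ) × Λ.BoundaryPath) :=
  Λ.ZP p q \ ⋃ ν ∈ G, Λ.ZP (Λ.comp p ν) (Λ.comp q ν)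

/-- The boundary-path groupoid `G_Λ` as a type. -/
abbrev bpSpace : Type := {a // a ∈ Λ.BPG}

/-- The topology on `G_Λ` generated by the basic sets `Z(p *ₛ q \ G)` with `G` finite. -/
def bpTop : TopologicalSpace Λ.bpSpace :=
  TopologicalSpace.generateFrom
    {V | ∃ (p q : Λ.Path) (G : Set Λ.Path), Λ.src p = Λ.src q ∧
      (∀ ν ∈ G, Λ.rng ν = Λ.src p) ∧ G.Finite ∧
      V = Subtype.val ⁻¹' Λ.ZPD p q G}

theorem isShift_zero (x : Λ.BoundaryPath) : Λ.IsShift 0 x x :=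
  ⟨fun i => by simp, fun i => by simp, fun p q _ _ => by simp⟩

/-- The unit space `G_Λ^{(0)}` of the boundary-path groupoid. -/
def unitSet : Set Λ.bpSpace := {a | a.1.2.1 = 0 ∧ a.1.1 = a.1.2.2}

/-- The unit `(x, 0, x)` of `G_Λ` corresponding to a boundary path `x`. -/
def unitOf (x : Λ.BoundaryPath) : Λ.bpSpace :=
  ⟨(x, 0, x), ⟨0, 0, x, by funext i; simp, Λ.isShift_zero x, Λ.isShift_zero x⟩⟩

end KGraph

/-! Expanding `S_{p*} S_q` by (KP3) and collapsing with (KP2) writes `S_p S_{p*} S_q S_{q*}`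
as a sum of `S_{pρ} S_{(pρ)*}` over `Λ^min(p,q)`; unique factorisation makes `(ρ, τ) ↦ pρ` a
bijection `Λ^min(p,q) → MCE(p,q)`, and `MCE` is symmetric, whence commutativity. -/

namespace KGraph

variable {k : ℕ} (Λ : KGraph k)

theorem comp_left_cancel {p ρ ρ' : Λ.Path} (hρ : Λ.src p = Λ.rng ρ)
    (hρ' : Λ.src p = Λ.rng ρ') (h : Λ.comp p ρ = Λ.comp p ρ') : ρ = ρ' := by
  have hdeg : Λ.deg ρ = Λ.deg ρ' :=
    add_left_cancel (by rw [← Λ.deg_comp p ρ hρ, ← Λ.deg_comp p ρ' hρ', h])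
  obtain ⟨_, -, huniq⟩ :=
    Λ.factorisation (Λ.comp p ρ) (Λ.deg p) (Λ.deg ρ) (Λ.deg_comp p ρ hρ)
  have hfac : ((p, ρ) : Λ.Path × Λ.Path) = (p, ρ') :=
    (huniq (p, ρ) ⟨hρ, rfl, rfl, rfl⟩).trans
      (huniq (p, ρ') ⟨hρ', rfl, hdeg.symm, h.symm⟩).symm
  exact congrArg Prod.snd hfac

theorem injOn_comp_minPairs (p q : Λ.Path) :
    Set.InjOn (fun x => Λ.comp p x.1) (Λ.minPairs p q) := by
  rintro ⟨ρ, τ⟩ ⟨hρ, hτ, hcomm, -⟩ ⟨ρ', τ'⟩ ⟨hρ', hτ', hcomm', -⟩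
    (h : Λ.comp p ρ = Λ.comp p ρ')
  have hττ' : Λ.comp q τ = Λ.comp q τ' := by rw [← hcomm, ← hcomm', h]
  exact Prod.ext (Λ.comp_left_cancel hρ hρ' h) (Λ.comp_left_cancel hτ hτ' hττ')

theorem MCE_eq_image_minPairs (p q : Λ.Path) :
    Λ.MCE p q = (fun x => Λ.comp p x.1) '' Λ.minPairs p q := by
  ext t
  constructor
  · rintro ⟨hdeg, ⟨ρ, hρ, rfl⟩, ⟨τ, hτ, hcomm⟩⟩
    exact ⟨(ρ, τ), ⟨hρ, hτ, hcomm.symm, hdeg⟩, rfl⟩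
  · rintro ⟨⟨ρ, τ⟩, ⟨hρ, hτ, hcomm, hdeg⟩, rfl⟩
    exact ⟨hdeg, ⟨ρ, hρ, rfl⟩, ⟨τ, hτ, hcomm.symm⟩⟩

theorem MCE_comm (p q : Λ.Path) : Λ.MCE p q = Λ.MCE q p := by
  ext t
  simp only [MCE, Set.mem_ofPred_eq, sup_comm (Λ.deg p)]
  tauto

variable {Λ} {A : Type} [NonUnitalRing A] {S T : Λ.Path → A}

theorem mul_mul_mul_eq_finsum_MCE (h2 : Λ.KP2 S T) (h3 : Λ.KP3 S T) {p q : Λ.Path}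
    (hfin : (Λ.minPairs p q).Finite) :
    S p * T p * (S q * T q) = ∑ᶠ t ∈ Λ.MCE p q, S t * T t := by
  have hterm : ∀ x ∈ Λ.minPairs p q,
      S p * (S x.1 * T x.2) * T q = S (Λ.comp p x.1) * T (Λ.comp p x.1) := by
    rintro ⟨ρ, τ⟩ ⟨hρ, hτ, hcomm, -⟩
    calc S p * (S ρ * T τ) * T q = S p * S ρ * (T τ * T q) := by simp only [mul_assoc]
      _ = S (Λ.comp p ρ) * T (Λ.comp p ρ) := by rw [(h2 p ρ hρ).1, (h2 q τ hτ).2, hcomm]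
  calc S p * T p * (S q * T q) = S p * (T p * S q) * T q := by simp only [mul_assoc]
    _ = ∑ᶠ x ∈ Λ.minPairs p q, S p * (S x.1 * T x.2) * T q := by
      rw [h3 p q, mul_finsum_mem' _ _ hfin, finsum_mem_mul' _ _ hfin]
    _ = ∑ᶠ x ∈ Λ.minPairs p q, S (Λ.comp p x.1) * T (Λ.comp p x.1) :=
      finsum_mem_congr rfl hterm
    _ = ∑ᶠ t ∈ Λ.MCE p q, S t * T t := by
      rw [MCE_eq_image_minPairs, finsum_mem_image (Λ.injOn_comp_minPairs p q)]

end KGraph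

theorem kp_range_projections_commute_general {k : ℕ} (Λ : KGraph k)
    (hΛ : Λ.FinitelyAligned)
    (A : Type) [NonUnitalRing A] (S T : Λ.Path → A)
    (h2 : Λ.KP2 S T) (h3 : Λ.KP3 S T) :
    (∀ p q, S p * T p * (S q * T q) = ∑ᶠ t ∈ Λ.MCE p q, S t * T t) ∧
    ∀ p q, S p * T p * (S q * T q) = S q * T q * (S p * T p) := by
  have hprod : ∀ p q, S p * T p * (S q * T q) = ∑ᶠ t ∈ Λ.MCE p q, S t * T t :=
    fun p q => KGraph.mul_mul_mul_eq_finsum_MCE h2 h3 (hΛ p q)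
  exact ⟨hprod, fun p q => by rw [hprod p q, hprod q p, Λ.MCE_comm p q]⟩

/-- for a family satisfying (KP1)–(KP3) in an `R`-algebra `A`,
`S_p S_{p*} S_q S_{q*} = ∑_{pρ ∈ MCE(p,q)} S_{pρ} S_{(pρ)*}`, and the elements
`S_p S_{p*}` pairwise commute. -/
theorem kp_range_projections_commute {k : ℕ} (hk : 0 < k) (Λ : KGraph k)
    (hΛ : Λ.FinitelyAligned) (R : Type) [CommRing R]
    (A : Type) [NonUnitalRing A] [Module R A] [SMulCommClass R A A]
    [IsScalarTower R A A] (S T : Λ.Path → A)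
    (hvx : ∀ v, T (Λ.vertex v) = S (Λ.vertex v))
    (h1 : Λ.KP1 S) (h2 : Λ.KP2 S T) (h3 : Λ.KP3 S T) :
    (∀ p q, S p * T p * (S q * T q) = ∑ᶠ t ∈ Λ.MCE p q, S t * T t) ∧
    ∀ p q, S p * T p * (S q * T q) = S q * T q * (S p * T p) :=
  kp_range_projections_commute_general Λ hΛ A S T h2 h3
end

section
/- Let k be a positive integer, Λ a finitely aligned k-graph, R a commutative ring with 1, A an R-algebra, and {S_λ, S_{μ*} : λ, μ ∈ Λ} a family in A satisfying (KP1), (KP2) and (KP3). Then for every n ∈ ℕ^k and all λ, μ ∈ Λ^{≤n}, one has S_{λ*} S_μ = δ_{λ,μ} S_{s(λ)} (that is, S_{λ*} S_μ = S_{s(λ)} if λ = μ, and S_{λ*} S_μ = 0 if λ ≠ μ). -/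
/-- The set `Λ^{≤ n}`. -/
def KGraph.bddPaths {k : ℕ} (Λ : KGraph k) (n : Fin k → ℕ) : Set Λ.Path :=
  {p | Λ.deg p ≤ n ∧ ∀ i, Λ.deg p i < n i →
    ¬∃ e, Λ.rng e = Λ.src p ∧ Λ.deg e = Pi.single i 1}

/-! If `p, q ∈ Λ^{≤n}` and `pρ = qτ` is a minimal common extension, then `d(p) + d(ρ) =
d(p) ∨ d(q) ≤ n`. Were `d(ρ)ᵢ > 0`, then `d(p)ᵢ < nᵢ` while the initial segment of `ρ` of
degree `eᵢ` is an edge at `s(p)`, contradicting `p ∈ Λ^{≤n}`. So `ρ` and likewise `τ` are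
vertices, whence `p = q`, and (KP3) reduces `S_{p*} S_q` to `S_{s(p)}² = S_{s(p)}` or to the
empty sum. -/

namespace KGraph

variable {k : ℕ} (Λ : KGraph k)

theorem eq_vertex_rng_of_deg_eq_zero {p : Λ.Path} (h : Λ.deg p = 0) :
    p = Λ.vertex (Λ.rng p) := by
  obtain ⟨x, _, hx⟩ := Λ.factorisation p 0 0 (by simp [h])
  have hleft := hx (Λ.vertex (Λ.rng p), p)
    ⟨by simp [Λ.src_vertex], Λ.deg_vertex _, h, Λ.vertex_comp p⟩
  have hright := hx (p, Λ.vertex (Λ.src p))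
    ⟨by simp [Λ.rng_vertex], h, Λ.deg_vertex _, Λ.comp_vertex p⟩
  exact (congrArg Prod.fst (hleft.trans hright.symm)).symm

theorem exists_edge_of_deg_pos {p : Λ.Path} {i : Fin k} (h : 0 < Λ.deg p i) :
    ∃ e, Λ.rng e = Λ.rng p ∧ Λ.deg e = Pi.single i 1 := by
  have hsplit : Λ.deg p = Pi.single i 1 + (Λ.deg p - Pi.single i 1) := by
    funext j
    by_cases hj : j = i <;> simp [hj]
    omega
  obtain ⟨⟨e, p'⟩, ⟨hcomposable, hdeg, _, hcomp⟩, _⟩ := Λ.factorisation p _ _ hsplit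
  exact ⟨e, by rw [← hcomp, Λ.rng_comp e p' hcomposable], hdeg⟩

theorem deg_eq_zero_of_mem_bddPaths {n : Fin k → ℕ} {p ρ : Λ.Path} (hp : p ∈ Λ.bddPaths n)
    (hρ : Λ.rng ρ = Λ.src p) (hle : Λ.deg p + Λ.deg ρ ≤ n) : Λ.deg ρ = 0 := by
  by_contra hne
  obtain ⟨i, hi⟩ : ∃ i, Λ.deg ρ i ≠ 0 := Function.ne_iff.mp hne
  have hlt : Λ.deg p i < n i := by
    have := hle i
    simp only [Pi.add_apply] at this
    omega
  obtain ⟨e, he, hdeg⟩ := Λ.exists_edge_of_deg_pos (Nat.pos_of_ne_zero hi)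
  exact hp.2 i hlt ⟨e, he.trans hρ, hdeg⟩

theorem vertex_src_mem_minPairs_self (p : Λ.Path) :
    (Λ.vertex (Λ.src p), Λ.vertex (Λ.src p)) ∈ Λ.minPairs p p :=
  ⟨(Λ.rng_vertex _).symm, (Λ.rng_vertex _).symm, rfl, by simp [Λ.comp_vertex]⟩

theorem eq_and_eq_vertex_of_mem_minPairs {n : Fin k → ℕ} {p q ρ τ : Λ.Path}
    (hp : p ∈ Λ.bddPaths n) (hq : q ∈ Λ.bddPaths n) (h : (ρ, τ) ∈ Λ.minPairs p q) :
    p = q ∧ ρ = Λ.vertex (Λ.src p) ∧ τ = Λ.vertex (Λ.src q) := by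
  obtain ⟨hpρ, hqτ, hcomp, hdeg⟩ := h
  have hsup : Λ.deg p ⊔ Λ.deg q ≤ n := sup_le hp.1 hq.1
  have hdegρ : Λ.deg p + Λ.deg ρ = Λ.deg p ⊔ Λ.deg q := by
    rw [← Λ.deg_comp p ρ hpρ, hdeg]
  have hdegτ : Λ.deg q + Λ.deg τ = Λ.deg p ⊔ Λ.deg q := by
    rw [← Λ.deg_comp q τ hqτ, ← hcomp, hdeg]
  have hρ : ρ = Λ.vertex (Λ.src p) := by
    rw [hpρ]
    exact Λ.eq_vertex_rng_of_deg_eq_zero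
      (Λ.deg_eq_zero_of_mem_bddPaths hp hpρ.symm (hdegρ ▸ hsup))
  have hτ : τ = Λ.vertex (Λ.src q) := by
    rw [hqτ]
    exact Λ.eq_vertex_rng_of_deg_eq_zero
      (Λ.deg_eq_zero_of_mem_bddPaths hq hqτ.symm (hdegτ ▸ hsup))
  refine ⟨?_, hρ, hτ⟩
  rwa [hρ, hτ, Λ.comp_vertex, Λ.comp_vertex] at hcomp

theorem minPairs_self_of_mem_bddPaths {n : Fin k → ℕ} {p : Λ.Path} (hp : p ∈ Λ.bddPaths n) :
    Λ.minPairs p p = {(Λ.vertex (Λ.src p), Λ.vertex (Λ.src p))} := by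
  refine Set.eq_singleton_iff_unique_mem.mpr ⟨Λ.vertex_src_mem_minPairs_self p, ?_⟩
  rintro ⟨ρ, τ⟩ h
  obtain ⟨-, rfl, rfl⟩ := Λ.eq_and_eq_vertex_of_mem_minPairs hp hp h
  rfl

theorem minPairs_eq_empty_of_mem_bddPaths {n : Fin k → ℕ} {p q : Λ.Path}
    (hp : p ∈ Λ.bddPaths n) (hq : q ∈ Λ.bddPaths n) (hne : p ≠ q) :
    Λ.minPairs p q = ∅ :=
  Set.eq_empty_iff_forall_notMem.mpr fun _ h =>
    hne (Λ.eq_and_eq_vertex_of_mem_minPairs hp hq h).1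

end KGraph

theorem kp_bdd_orthogonality_general {k : ℕ} (Λ : KGraph k)
    (A : Type) [NonUnitalRing A] (S T : Λ.Path → A)
    (hvx : ∀ v, T (Λ.vertex v) = S (Λ.vertex v))
    (h1 : Λ.KP1 S) (h3 : Λ.KP3 S T) :
    ∀ n : Fin k → ℕ, ∀ p ∈ Λ.bddPaths n, ∀ q ∈ Λ.bddPaths n,
      (p = q → T p * S q = S (Λ.vertex (Λ.src p))) ∧
      (p ≠ q → T p * S q = 0) := by
  intro n p hp q hq
  constructor
  · rintro rfl
    rw [h3, Λ.minPairs_self_of_mem_bddPaths hp, finsum_mem_singleton, hvx, h1.1]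
  · intro hne
    rw [h3, Λ.minPairs_eq_empty_of_mem_bddPaths hp hq hne, finsum_mem_empty]

/-- for a family satisfying (KP1)–(KP3) and `p, q ∈ Λ^{≤n}`,
`S_{p*} S_q = δ_{p,q} S_{s(p)}`. -/
theorem kp_bdd_orthogonality {k : ℕ} (hk : 0 < k) (Λ : KGraph k)
    (hΛ : Λ.FinitelyAligned) (R : Type) [CommRing R]
    (A : Type) [NonUnitalRing A] [Module R A] [SMulCommClass R A A]
    [IsScalarTower R A A] (S T : Λ.Path → A)
    (hvx : ∀ v, T (Λ.vertex v) = S (Λ.vertex v))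
    (h1 : Λ.KP1 S) (h2 : Λ.KP2 S T) (h3 : Λ.KP3 S T) :
    ∀ n : Fin k → ℕ, ∀ p ∈ Λ.bddPaths n, ∀ q ∈ Λ.bddPaths n,
      (p = q → T p * S q = S (Λ.vertex (Λ.src p))) ∧
      (p ≠ q → T p * S q = 0) :=
  kp_bdd_orthogonality_general Λ A S T hvx h1 h3
end

section
/- Let k be a positive integer, Λ a finitely aligned k-graph, R a commutative ring with 1, A an R-algebra, and {S_λ, S_{μ*} : λ, μ ∈ Λ} a family in A satisfying (KP1), (KP2) and (KP3). Suppose that r S_v ≠ 0 for all r ∈ R\{0} and all vertices v ∈ Λ^0. Then for every r ∈ R\{0}, every λ ∈ Λ one has r S_λ ≠ 0; and for all λ, μ ∈ Λ with s(λ) = s(μ), every r ∈ R\{0}, and every finite non-exhaustive subset G ⊆ s(λ)Λ, one has r S_λ ( ∏_{ν ∈ G} (S_{s(λ)} − S_ν S_{ν*}) ) S_{μ*} ≠ 0. -/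
/-!
By (KP3) and `Λ^min(p,p) = {(s(p), s(p))}` we have `S_{p*} S_p = S_{s(p)}`, so `S_p` and
`S_{q*}` can be cancelled from the outside. A path `μ ∈ s(p)Λ` witnessing that `G` is not
exhaustive has `Λ^min(μ,ν) = ∅`, hence `S_{μ*} S_ν = 0`, for every `ν ∈ G`; so `S_{μ*}` passes
through every factor `S_{s(p)} - S_ν S_{ν*}`, and
`S_{μ*} S_{p*} (S_p ∏_{ν ∈ G} (S_{s(p)} - S_ν S_{ν*}) S_{q*}) S_q S_μ = S_{s(μ)}`.
Multiplying by `r` shows that the middle factor cannot be killed by `r`.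
-/

theorem List.foldl_mul_eq_self {α : Type*} [Semigroup α] {c : α} :
    ∀ {l : List α}, (∀ a ∈ l, c * a = c) → l.foldl (· * ·) c = c
  | [], _ => rfl
  | a :: l, h => by
      rw [List.foldl_cons, h a List.mem_cons_self]
      exact List.foldl_mul_eq_self fun x hx => h x (List.mem_cons_of_mem a hx)

theorem smul_ne_zero_of_mul_mul_eq {R A : Type*} [Semiring R] [NonUnitalNonAssocSemiring A]
    [Module R A] [SMulCommClass R A A] [IsScalarTower R A A] {r : R} {a x b y : A}
    (h : a * x * b = y) (hy : r • y ≠ 0) : r • x ≠ 0 := by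
  intro hx
  apply hy
  rw [← h, ← smul_mul_assoc, ← mul_smul_comm, hx, mul_zero, zero_mul]

namespace KGraph

variable {k : ℕ} (Λ : KGraph k)

theorem eq_vertex_of_deg_eq_zero {p : Λ.Path} (hp : Λ.deg p = 0) : p = Λ.vertex (Λ.rng p) := by
  obtain ⟨x, -, hx⟩ := Λ.factorisation p 0 0 (by rw [hp, add_zero])
  have h₁ : ((p, Λ.vertex (Λ.src p)) : Λ.Path × Λ.Path) = x :=
    hx _ ⟨(Λ.rng_vertex _).symm, hp, Λ.deg_vertex _, Λ.comp_vertex p⟩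
  have h₂ : ((Λ.vertex (Λ.rng p), p) : Λ.Path × Λ.Path) = x :=
    hx _ ⟨Λ.src_vertex _, Λ.deg_vertex _, hp, Λ.vertex_comp p⟩
  exact congrArg Prod.fst (h₁.trans h₂.symm)

theorem minPairs_self (p : Λ.Path) :
    Λ.minPairs p p = {(Λ.vertex (Λ.src p), Λ.vertex (Λ.src p))} := by
  ext ⟨ρ, τ⟩
  constructor
  · rintro ⟨hρ, hτ, hpρτ, hdeg⟩
    have deg_eq_zero : ∀ σ, Λ.src p = Λ.rng σ → Λ.comp p σ = Λ.comp p ρ → Λ.deg σ = 0 :=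
      fun σ hσ hpσ => by
        have := Λ.deg_comp p σ hσ
        rwa [hpσ, hdeg, sup_idem, left_eq_add] at this
    rw [Λ.eq_vertex_of_deg_eq_zero (deg_eq_zero ρ hρ rfl),
      Λ.eq_vertex_of_deg_eq_zero (deg_eq_zero τ hτ hpρτ.symm), ← hρ, ← hτ]
    rfl
  · rintro ⟨⟩
    exact ⟨(Λ.rng_vertex _).symm, (Λ.rng_vertex _).symm, rfl, by rw [Λ.comp_vertex, sup_idem]⟩

section Family

variable {A : Type} [NonUnitalRing A] {S T : Λ.Path → A}

/-- `∏_{ν ∈ l} (S_v - S_ν S_{ν*})`, with the idempotent factor `S_v` in front so that the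
empty product is `S_v`. -/
def gapProd (S T : Λ.Path → A) (v : Λ.Obj) (l : List Λ.Path) : A :=
  (l.map fun ν => S (Λ.vertex v) - S ν * T ν).foldl (· * ·) (S (Λ.vertex v))

theorem ghost_mul_self (hvx : ∀ v, T (Λ.vertex v) = S (Λ.vertex v)) (h1 : Λ.KP1 S)
    (h3 : Λ.KP3 S T) (p : Λ.Path) : T p * S p = S (Λ.vertex (Λ.src p)) := by
  rw [h3 p p, minPairs_self, finsum_mem_singleton, hvx, h1.1]

theorem ghost_mul_vertex (hvx : ∀ v, T (Λ.vertex v) = S (Λ.vertex v)) (h2 : Λ.KP2 S T)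
    (p : Λ.Path) : T p * S (Λ.vertex (Λ.rng p)) = T p := by
  rw [← hvx, (h2 _ p (Λ.src_vertex _)).2, Λ.vertex_comp]

theorem ghost_mul_eq_zero (h3 : Λ.KP3 S T) {p q : Λ.Path} (hpq : Λ.minPairs p q = ∅) :
    T p * S q = 0 := by
  rw [h3, hpq, finsum_mem_empty]

theorem ghost_mul_gapProd (hvx : ∀ v, T (Λ.vertex v) = S (Λ.vertex v)) (h2 : Λ.KP2 S T)
    (h3 : Λ.KP3 S T) {p : Λ.Path} {l : List Λ.Path} (hl : ∀ ν ∈ l, Λ.minPairs p ν = ∅) :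
    T p * Λ.gapProd S T (Λ.rng p) l = T p := by
  rw [gapProd, ← List.foldl_assoc (op := (· * · : A → A → A)), ghost_mul_vertex Λ hvx h2]
  refine List.foldl_mul_eq_self fun a ha => ?_
  obtain ⟨ν, hν, rfl⟩ := List.mem_map.mp ha
  rw [mul_sub, ghost_mul_vertex Λ hvx h2, ← mul_assoc, ghost_mul_eq_zero Λ h3 (hl ν hν),
    zero_mul, sub_zero]

end Family

end KGraph

theorem kp_nonzero_products_general {k : ℕ} (Λ : KGraph k)
    (R : Type) [CommRing R]
    (A : Type) [NonUnitalRing A] [Module R A] [SMulCommClass R A A]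
    [IsScalarTower R A A] (S T : Λ.Path → A)
    (hvx : ∀ v, T (Λ.vertex v) = S (Λ.vertex v))
    (h1 : Λ.KP1 S) (h2 : Λ.KP2 S T) (h3 : Λ.KP3 S T)
    (hS : ∀ r : R, r ≠ 0 → ∀ v, r • S (Λ.vertex v) ≠ 0) :
    (∀ r : R, r ≠ 0 → ∀ p, r • S p ≠ 0) ∧
    ∀ p q, Λ.src p = Λ.src q → ∀ r : R, r ≠ 0 →
      ∀ l : List Λ.Path, l.Nodup → (∀ ν ∈ l, Λ.rng ν = Λ.src p) →
        ¬Λ.Exhaustive (Λ.src p) {ν | ν ∈ l} →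
        r • (S p *
          (l.map fun ν => S (Λ.vertex (Λ.src p)) - S ν * T ν).foldl (· * ·)
            (S (Λ.vertex (Λ.src p))) * T q) ≠ 0 := by
  have ghost_mul_self := Λ.ghost_mul_self hvx h1 h3
  refine ⟨fun r hr p => smul_ne_zero_of_mul_mul_eq (a := T p) (b := S (Λ.vertex (Λ.src p)))
    (by rw [ghost_mul_self, h1.1]) (hS r hr _), ?_⟩
  intro p q hpq r hr l _ _ hl
  obtain ⟨μ, hμ, hμl⟩ : ∃ μ, Λ.rng μ = Λ.src p ∧ ∀ ν ∈ l, Λ.minPairs μ ν = ∅ := by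
    simpa [KGraph.Exhaustive, Set.not_nonempty_iff_eq_empty] using hl
  refine smul_ne_zero_of_mul_mul_eq (a := T μ * T p) (b := S q * S μ) ?_ (hS r hr (Λ.src μ))
  calc T μ * T p * (S p * Λ.gapProd S T (Λ.src p) l * T q) * (S q * S μ)
      = T μ * (T p * S p) * Λ.gapProd S T (Λ.src p) l * (T q * S q) * S μ := by
        simp only [mul_assoc]
    _ = T μ * Λ.gapProd S T (Λ.rng μ) l * S (Λ.vertex (Λ.rng μ)) * S μ := by
        rw [ghost_mul_self, ghost_mul_self, ← hpq, ← hμ, Λ.ghost_mul_vertex hvx h2]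
    _ = S (Λ.vertex (Λ.src μ)) := by
        rw [Λ.ghost_mul_gapProd hvx h2 h3 hμl, Λ.ghost_mul_vertex hvx h2, ghost_mul_self]

/-- if `r • S_v ≠ 0` for all `r ≠ 0` and vertices `v`, then `r • S_p ≠ 0`
for all paths `p`, and for all `p, q` with `s(p) = s(q)` and every finite non-exhaustive
`G ⊆ s(p)Λ` (enumerated by a duplicate-free list `l`),
`r • (S_p (∏_{ν ∈ G} (S_{s(p)} - S_ν S_{ν*})) S_{q*}) ≠ 0`. -/
theorem kp_nonzero_products {k : ℕ} (hk : 0 < k) (Λ : KGraph k)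
    (hΛ : Λ.FinitelyAligned) (R : Type) [CommRing R]
    (A : Type) [NonUnitalRing A] [Module R A] [SMulCommClass R A A]
    [IsScalarTower R A A] (S T : Λ.Path → A)
    (hvx : ∀ v, T (Λ.vertex v) = S (Λ.vertex v))
    (h1 : Λ.KP1 S) (h2 : Λ.KP2 S T) (h3 : Λ.KP3 S T)
    (hS : ∀ r : R, r ≠ 0 → ∀ v, r • S (Λ.vertex v) ≠ 0) :
    (∀ r : R, r ≠ 0 → ∀ p, r • S p ≠ 0) ∧
    ∀ p q, Λ.src p = Λ.src q → ∀ r : R, r ≠ 0 →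
      ∀ l : List Λ.Path, l.Nodup → (∀ ν ∈ l, Λ.rng ν = Λ.src p) →
        ¬Λ.Exhaustive (Λ.src p) {ν | ν ∈ l} →
        r • (S p *
          (l.map fun ν => S (Λ.vertex (Λ.src p)) - S ν * T ν).foldl (· * ·)
            (S (Λ.vertex (Λ.src p))) * T q) ≠ 0 :=
  kp_nonzero_products_general Λ R A S T hvx h1 h2 h3 hS
end

section
/- Let k be a positive integer, Λ a finitely aligned k-graph, and R a commutative ring with 1. Then there exists an R-algebra KP_R(Λ) generated by a Kumjian-Pask Λ-family {s_λ, s_{μ*} : λ, μ ∈ Λ} which is universal: whenever {S_λ, S_{μ*} : λ, μ ∈ Λ} is a Kumjian-Pask Λ-family in an R-algebra A, there exists a unique R-algebra homomorphism π_S : KP_R(Λ) → A such that π_S(s_λ) = S_λ and π_S(s_{μ*}) = S_{μ*} for all λ, μ ∈ Λ. -/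
/-- A bundled universal Kumjian–Pask algebra for `Λ` over `R`. -/
structure UniversalKPAlgebra (R : Type) [CommRing R] {k : ℕ} (Λ : KGraph k) where
  carrier : Type
  [ring : NonUnitalRing carrier]
  [mod : Module R carrier]
  [sc : SMulCommClass R carrier carrier]
  [st : IsScalarTower R carrier carrier]
  s : Λ.Path → carrier
  t : Λ.Path → carrier
  univ : Λ.IsUniversalKP R carrier s t

/-!
`KP_R(Λ)` is the non-unital `R`-algebra presented by generators `s_p`, `s_{p*}` and the
relations (KP1)–(KP4). It is built inside the unital algebra with the same presentation (a
quotient of the free algebra) as the non-unital subalgebra generated by the `s_p`, `s_{p*}`.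
A Kumjian–Pask family in a non-unital algebra `A` is still one in the unitization of `A`, so it
induces a unital map out of the quotient; that map sends the generated subalgebra into `A`,
and it is unique there because the generators generate. Finite alignment makes the sums in
(KP3) finite, so that they are preserved by homomorphisms.
-/

theorem map_foldl_mul {M N F : Type*} [Mul M] [Mul N] [FunLike F M N] [MulHomClass F M N]
    (f : F) (l : List M) (a : M) :
    f (l.foldl (· * ·) a) = (l.map f).foldl (· * ·) (f a) := by
  induction l generalizing a with
  | nil => rfl
  | cons x xs ih => simp [ih]

section NonUnitalAdjoin

variable {R B C : Type*} [CommSemiring R] [NonUnitalNonAssocSemiring B] [Module R B]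
  [IsScalarTower R B B] [SMulCommClass R B B] [NonUnitalNonAssocSemiring C] [Module R C]

theorem NonUnitalAlgHom.ext_of_adjoin_eq_top {s : Set B}
    (hs : NonUnitalAlgebra.adjoin R s = ⊤) {φ ψ : B →ₙₐ[R] C} (h : ∀ x ∈ s, φ x = ψ x) :
    φ = ψ :=
  ext fun _ => NonUnitalAlgebra.adjoin_le (S := equalizer φ ψ) h (hs ▸ trivial)

theorem NonUnitalAlgebra.adjoin_adjoin_coe_preimage {s : Set B} :
    adjoin R (((↑) : adjoin R s → B) ⁻¹' s) = ⊤ := by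
  refine NonUnitalAlgebra.eq_top_iff.2 fun ⟨x, hx⟩ => adjoin_induction
    (p := fun y hy => (⟨y, hy⟩ : adjoin R s) ∈ adjoin R (((↑) : adjoin R s → B) ⁻¹' s))
    (fun _ hy => subset_adjoin R hy) (fun _ _ _ _ => add_mem) (zero_mem _)
    (fun _ _ _ _ => mul_mem) (fun r _ _ => SMulMemClass.smul_mem r) hx

end NonUnitalAdjoin

section UnitizationRestrict

variable {R A Q : Type*} [CommRing R] [NonUnitalRing A] [Module R A] [IsScalarTower R A A]
  [SMulCommClass R A A] [Ring Q] [Algebra R Q]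

theorem AlgHom.fst_eq_zero_of_mem_adjoin (F : Q →ₐ[R] Unitization R A) {s : Set Q}
    (hs : ∀ x ∈ s, (F x).fst = 0) {x : Q} (hx : x ∈ NonUnitalAlgebra.adjoin R s) :
    (F x).fst = 0 := by
  induction hx using NonUnitalAlgebra.adjoin_induction with
  | mem x hx => exact hs x hx
  | add x y _ _ hx hy => simp [hx, hy]
  | zero => simp
  | mul x y _ _ hx _ => simp [hx]
  | smul r x _ hx => simp [hx]

def AlgHom.sndRestrict (F : Q →ₐ[R] Unitization R A) (S : NonUnitalSubalgebra R Q)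
    (hS : ∀ x ∈ S, (F x).fst = 0) : S →ₙₐ[R] A where
  toFun x := (F x).snd
  map_smul' r x := by simp
  map_zero' := by simp
  map_add' x y := by simp
  map_mul' x y := by simp [Unitization.snd_mul, hS x x.2, hS y y.2]

end UnitizationRestrict

section Presentation

variable (R : Type) [CommRing R] {X : Type} (rel : FreeAlgebra R X → FreeAlgebra R X → Prop)

/-- The non-unital `R`-algebra with generators `X` and relations `rel`, realised as the
non-unital subalgebra generated by `X` in the unital algebra with the same presentation. -/
def NonUnitalPresented : NonUnitalSubalgebra R (RingQuot rel) :=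
  NonUnitalAlgebra.adjoin R (Set.range fun x => RingQuot.mkAlgHom R rel (FreeAlgebra.ι R x))

namespace NonUnitalPresented

def gen (x : X) : NonUnitalPresented R rel :=
  ⟨RingQuot.mkAlgHom R rel (FreeAlgebra.ι R x), NonUnitalAlgebra.subset_adjoin R ⟨x, rfl⟩⟩

theorem adjoin_range_gen : NonUnitalAlgebra.adjoin R (Set.range (gen R rel)) = ⊤ := by
  have : Set.range (gen R rel) = Subtype.val ⁻¹'
      Set.range fun x => RingQuot.mkAlgHom R rel (FreeAlgebra.ι R x) := by
    ext ⟨y, hy⟩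
    simp [gen, Subtype.ext_iff]
  rw [this]
  exact NonUnitalAlgebra.adjoin_adjoin_coe_preimage

variable {R rel} {A : Type} [NonUnitalRing A] [Module R A] [IsScalarTower R A A]
  [SMulCommClass R A A]

theorem existsUnique_lift (f : X → A)
    (hf : ∀ ⦃x y⦄, rel x y → FreeAlgebra.lift R (fun x => (f x : Unitization R A)) x =
      FreeAlgebra.lift R (fun x => (f x : Unitization R A)) y) :
    ∃! π : NonUnitalPresented R rel →ₙₐ[R] A, ∀ x, π (gen R rel x) = f x := by
  set F := RingQuot.liftAlgHom R ⟨FreeAlgebra.lift R (fun x => (f x : Unitization R A)), hf⟩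
  have hF : ∀ x, F (RingQuot.mkAlgHom R rel (FreeAlgebra.ι R x)) = f x := by
    simp [F]
  have hfst : ∀ y ∈ NonUnitalPresented R rel, (F y).fst = 0 :=
    fun y hy => F.fst_eq_zero_of_mem_adjoin (by rintro _ ⟨x, rfl⟩; simp [hF]) hy
  refine ⟨F.sndRestrict _ hfst, fun x => by simp [AlgHom.sndRestrict, gen, hF], ?_⟩
  refine fun π hπ => NonUnitalAlgHom.ext_of_adjoin_eq_top (adjoin_range_gen R rel) ?_
  rintro _ ⟨x, rfl⟩
  rw [hπ x]
  simp [AlgHom.sndRestrict, gen, hF]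

end NonUnitalPresented

end Presentation

namespace KGraph

variable {k : ℕ} (Λ : KGraph k)

theorem isKPFamily_comp_iff (hΛ : Λ.FinitelyAligned) {A B F : Type} [NonUnitalRing A]
    [NonUnitalRing B] [FunLike F A B] [NonUnitalRingHomClass F A B] (f : F)
    (hf : Function.Injective f) {S T : Λ.Path → A} :
    Λ.IsKPFamily (f ∘ S) (f ∘ T) ↔ Λ.IsKPFamily S T := by
  have kp3 : ∀ p q, f (∑ᶠ x ∈ Λ.minPairs p q, S x.1 * T x.2) =
      ∑ᶠ x ∈ Λ.minPairs p q, f (S x.1 * T x.2) := fun p q =>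
    (f : A →+ B).map_finsum_mem (fun x : Λ.Path × Λ.Path => S x.1 * T x.2) (hΛ p q)
  have kp4 : ∀ v (l : List Λ.Path),
      f ((l.map fun p => S (Λ.vertex v) - S p * T p).foldl (· * ·) (S (Λ.vertex v))) =
        (l.map fun p => f (S (Λ.vertex v)) - f (S p * T p)).foldl (· * ·)
          (f (S (Λ.vertex v))) := fun v l => by
    simp [map_foldl_mul, Function.comp_def]
  simp only [IsKPFamily, KP1, KP2, KP3, KP4, Function.comp_apply, ← kp3, ← kp4, ← map_mul,
    hf.eq_iff, map_eq_zero_iff f hf]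

variable (R : Type) [CommRing R]

abbrev freeS (p : Λ.Path) : FreeAlgebra R (Λ.Path ⊕ Λ.Path) := FreeAlgebra.ι R (.inl p)

abbrev freeT (p : Λ.Path) : FreeAlgebra R (Λ.Path ⊕ Λ.Path) := FreeAlgebra.ι R (.inr p)

/-- The relations (KP1)–(KP4) between the generators `s_p = freeS p`, `s_{p*} = freeT p`. -/
inductive KPRel : FreeAlgebra R (Λ.Path ⊕ Λ.Path) → FreeAlgebra R (Λ.Path ⊕ Λ.Path) → Prop
  | ghost_vertex (v : Λ.Obj) : KPRel (Λ.freeT R (Λ.vertex v)) (Λ.freeS R (Λ.vertex v))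
  | vertex_idem (v : Λ.Obj) :
      KPRel (Λ.freeS R (Λ.vertex v) * Λ.freeS R (Λ.vertex v)) (Λ.freeS R (Λ.vertex v))
  | vertex_orth (v w : Λ.Obj) : v ≠ w →
      KPRel (Λ.freeS R (Λ.vertex v) * Λ.freeS R (Λ.vertex w)) 0
  | comp (p q : Λ.Path) : Λ.src p = Λ.rng q →
      KPRel (Λ.freeS R p * Λ.freeS R q) (Λ.freeS R (Λ.comp p q))
  | ghost_comp (p q : Λ.Path) : Λ.src p = Λ.rng q →
      KPRel (Λ.freeT R q * Λ.freeT R p) (Λ.freeT R (Λ.comp p q))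
  | kp3 (p q : Λ.Path) :
      KPRel (Λ.freeT R p * Λ.freeS R q) (∑ᶠ x ∈ Λ.minPairs p q, Λ.freeS R x.1 * Λ.freeT R x.2)
  | kp4 (v : Λ.Obj) (l : List Λ.Path) : l.Nodup → Λ.FE v {p | p ∈ l} →
      KPRel ((l.map fun p => Λ.freeS R (Λ.vertex v) - Λ.freeS R p * Λ.freeT R p).foldl
        (· * ·) (Λ.freeS R (Λ.vertex v))) 0

theorem respects_kpRel_iff (hΛ : Λ.FinitelyAligned) {C F : Type} [Ring C]
    [FunLike F (FreeAlgebra R (Λ.Path ⊕ Λ.Path)) C]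
    [RingHomClass F (FreeAlgebra R (Λ.Path ⊕ Λ.Path)) C] (φ : F) :
    (∀ ⦃x y⦄, Λ.KPRel R x y → φ x = φ y) ↔
      Λ.IsKPFamily (fun p => φ (Λ.freeS R p)) (fun p => φ (Λ.freeT R p)) := by
  have kp3 : ∀ p q, φ (∑ᶠ x ∈ Λ.minPairs p q, Λ.freeS R x.1 * Λ.freeT R x.2) =
      ∑ᶠ x ∈ Λ.minPairs p q, φ (Λ.freeS R x.1) * φ (Λ.freeT R x.2) := fun p q => by
    simpa using (φ : _ →+ C).map_finsum_mem
      (fun x : Λ.Path × Λ.Path => Λ.freeS R x.1 * Λ.freeT R x.2) (hΛ p q)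
  constructor
  · intro h
    refine ⟨fun v => h (.ghost_vertex v), ⟨fun v => ?_, fun v w hvw => ?_⟩,
      fun p q hpq => ⟨?_, ?_⟩, fun p q => ?_, fun v l hl hE => ?_⟩
    · simpa using h (.vertex_idem v)
    · simpa using h (.vertex_orth v w hvw)
    · simpa using h (.comp p q hpq)
    · simpa using h (.ghost_comp p q hpq)
    · simpa [kp3] using h (.kp3 p q)
    · simpa [map_foldl_mul, Function.comp_def] using h (.kp4 v l hl hE)
  · rintro ⟨hv, ⟨hidem, horth⟩, hcomp, hkp3, hkp4⟩ x y hxy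
    cases hxy with
    | ghost_vertex v => exact hv v
    | vertex_idem v => simpa using hidem v
    | vertex_orth v w hvw => simpa using horth v w hvw
    | comp p q hpq => simpa using (hcomp p q hpq).1
    | ghost_comp p q hpq => simpa using (hcomp p q hpq).2
    | kp3 p q => simpa [kp3] using hkp3 p q
    | kp4 v l hl hE => simpa [map_foldl_mul, Function.comp_def] using hkp4 v l hl hE

/-- The Kumjian–Pask algebra `KP_R(Λ)`. -/
abbrev KPAlgebra : Type := NonUnitalPresented R (Λ.KPRel R)

def kpS (p : Λ.Path) : Λ.KPAlgebra R := NonUnitalPresented.gen R _ (.inl p)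

def kpT (p : Λ.Path) : Λ.KPAlgebra R := NonUnitalPresented.gen R _ (.inr p)

theorem isKPFamily_kpS_kpT (hΛ : Λ.FinitelyAligned) : Λ.IsKPFamily (Λ.kpS R) (Λ.kpT R) := by
  rw [← Λ.isKPFamily_comp_iff hΛ
    (NonUnitalSubalgebraClass.subtype (NonUnitalPresented R (Λ.KPRel R))) Subtype.val_injective]
  exact (Λ.respects_kpRel_iff R hΛ (RingQuot.mkAlgHom R _)).1 fun _ _ => RingQuot.mkAlgHom_rel R

theorem adjoin_range_kpS_union_range_kpT :
    NonUnitalAlgebra.adjoin R (Set.range (Λ.kpS R) ∪ Set.range (Λ.kpT R)) = ⊤ := by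
  rw [← Set.Sum.elim_range]
  convert NonUnitalPresented.adjoin_range_gen R (Λ.KPRel R)
  ext (p | p) <;> rfl

theorem existsUnique_lift_kpAlgebra (hΛ : Λ.FinitelyAligned) {A : Type} [NonUnitalRing A]
    [Module R A] [IsScalarTower R A A] [SMulCommClass R A A] {S T : Λ.Path → A}
    (hST : Λ.IsKPFamily S T) :
    ∃! π : Λ.KPAlgebra R →ₙₐ[R] A, (∀ p, π (Λ.kpS R p) = S p) ∧ (∀ p, π (Λ.kpT R p) = T p) := by
  have hU : Λ.IsKPFamily (fun p => (S p : Unitization R A)) (fun p => (T p : Unitization R A)) :=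
    (Λ.isKPFamily_comp_iff hΛ (Unitization.inrNonUnitalAlgHom R A)
      Unitization.inr_injective).2 hST
  have hrel := (Λ.respects_kpRel_iff R hΛ
    (FreeAlgebra.lift R fun x => ((Sum.elim S T x : A) : Unitization R A))).2 (by simpa using hU)
  simpa [Sum.forall, kpS, kpT] using NonUnitalPresented.existsUnique_lift (Sum.elim S T) hrel

theorem isUniversalKP_kpAlgebra (hΛ : Λ.FinitelyAligned) :
    Λ.IsUniversalKP R (Λ.KPAlgebra R) (Λ.kpS R) (Λ.kpT R) :=
  ⟨Λ.isKPFamily_kpS_kpT R hΛ, Λ.adjoin_range_kpS_union_range_kpT R,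
    fun _ _ _ _ _ _ _ hST => Λ.existsUnique_lift_kpAlgebra R hΛ hST⟩

end KGraph

theorem exists_universal_kumjian_pask_general {k : ℕ} (Λ : KGraph k)
    (hΛ : Λ.FinitelyAligned) (R : Type) [CommRing R] :
    Nonempty (UniversalKPAlgebra R Λ) :=
  ⟨⟨Λ.KPAlgebra R, Λ.kpS R, Λ.kpT R, Λ.isUniversalKP_kpAlgebra R hΛ⟩⟩

/-- existence of the universal Kumjian–Pask algebra `KP_R(Λ)`. -/
theorem exists_universal_kumjian_pask {k : ℕ} (hk : 0 < k) (Λ : KGraph k)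
    (hΛ : Λ.FinitelyAligned) (R : Type) [CommRing R] :
    Nonempty (UniversalKPAlgebra R Λ) :=
  exists_universal_kumjian_pask_general Λ hΛ R
end

section
/- Let k be a positive integer, Λ a finitely aligned k-graph, R a commutative ring with 1, and let KP_R(Λ) with Kumjian-Pask Λ-family {s_λ, s_{μ*}} be the universal Kumjian-Pask algebra of Λ over R. Then the R-submodules KP_R(Λ)_n := span_R{s_λ s_{μ*} : λ, μ ∈ Λ, d(λ) − d(μ) = n}, for n ∈ ℤ^k, form a ℤ^k-grading of KP_R(Λ): KP_R(Λ) = ⊕_{n ∈ ℤ^k} KP_R(Λ)_n and KP_R(Λ)_n · KP_R(Λ)_m ⊆ KP_R(Λ)_{n+m} for all n, m ∈ ℤ^k. -/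
/-- The degree-`n` component `KP_R(Λ)_n = span_R{s_p t_q : d(p) - d(q) = n}`. -/
def kpComponent {k : ℕ} (Λ : KGraph k) (R : Type) [CommRing R] {B : Type}
    [NonUnitalRing B] [Module R B] (s t : Λ.Path → B) (n : Fin k → ℤ) :
    Submodule R B :=
  Submodule.span R {b | ∃ p q : Λ.Path,
    (fun i => (Λ.deg p i : ℤ) - (Λ.deg q i : ℤ)) = n ∧ b = s p * t q}

namespace KGraph

variable {k : ℕ}

def intDeg (Λ : KGraph k) (p : Λ.Path) : Fin k → ℤ := fun i => Λ.deg p i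

variable {Λ : KGraph k}

theorem intDeg_vertex (v : Λ.Obj) : Λ.intDeg (Λ.vertex v) = 0 := by
  funext i; simp [intDeg, Λ.deg_vertex]

theorem intDeg_comp {p q : Λ.Path} (h : Λ.src p = Λ.rng q) :
    Λ.intDeg (Λ.comp p q) = Λ.intDeg p + Λ.intDeg q := by
  funext i; simp [intDeg, Λ.deg_comp p q h]

theorem intDeg_add_eq_of_mem_minPairs {p q : Λ.Path} {x : Λ.Path × Λ.Path}
    (hx : x ∈ Λ.minPairs p q) : Λ.intDeg p + Λ.intDeg x.1 = Λ.intDeg q + Λ.intDeg x.2 := by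
  obtain ⟨hp, hq, hcomp, -⟩ := hx
  rw [← intDeg_comp hp, ← intDeg_comp hq, hcomp]

namespace IsKPFamily

variable {A : Type} [NonUnitalRing A] {S T : Λ.Path → A}

theorem mul_ghost_vertex_src (hf : Λ.IsKPFamily S T) (p : Λ.Path) :
    S p * T (Λ.vertex (Λ.src p)) = S p := by
  rw [hf.1, (hf.2.2.1 p _ (Λ.rng_vertex _).symm).1, Λ.comp_vertex]

theorem vertex_src_mul_ghost (hf : Λ.IsKPFamily S T) (q : Λ.Path) :
    S (Λ.vertex (Λ.src q)) * T q = T q := by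
  rw [← hf.1, (hf.2.2.1 q _ (Λ.rng_vertex _).symm).2, Λ.comp_vertex]

theorem mul_ghost_eq_zero (hf : Λ.IsKPFamily S T) {p q : Λ.Path}
    (h : Λ.src p ≠ Λ.src q) : S p * T q = 0 := by
  calc S p * T q
      = S p * (T (Λ.vertex (Λ.src p)) * S (Λ.vertex (Λ.src q))) * T q := by
        rw [← mul_assoc, mul_ghost_vertex_src hf, mul_assoc, vertex_src_mul_ghost hf]
    _ = 0 := by rw [hf.1, hf.2.1.2 _ _ h, mul_zero, zero_mul]

end IsKPFamily

end KGraph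

open KGraph

section Grading

variable {k : ℕ} {Λ : KGraph k} {R : Type} [CommRing R] {B : Type} [NonUnitalRing B] [Module R B]
  {s t : Λ.Path → B}

theorem mul_ghost_mem_kpComponent (p q : Λ.Path) :
    s p * t q ∈ kpComponent Λ R s t (Λ.intDeg p - Λ.intDeg q) :=
  Submodule.subset_span ⟨p, q, rfl, rfl⟩

theorem mul_ghost_mul_mul_ghost_mem_kpComponent (hf : Λ.IsKPFamily s t) (p q a b : Λ.Path) :
    s p * t q * (s a * t b) ∈
      kpComponent Λ R s t (Λ.intDeg p - Λ.intDeg q + (Λ.intDeg a - Λ.intDeg b)) := by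
  obtain hpq | hpq := ne_or_eq (Λ.src p) (Λ.src q)
  · rw [hf.mul_ghost_eq_zero hpq, zero_mul]; exact zero_mem _
  obtain hab | hab := ne_or_eq (Λ.src a) (Λ.src b)
  · rw [hf.mul_ghost_eq_zero hab, mul_zero]; exact zero_mem _
  rw [show s p * t q * (s a * t b) = s p * (t q * s a) * t b by simp only [mul_assoc],
    hf.2.2.2.1 q a]
  refine finsum_mem_induction (fun y => s p * y * t b ∈ _) (by simp)
    (fun y z hy hz => by simpa only [mul_add, add_mul] using add_mem hy hz) ?_
  intro x hx
  have hdeg := intDeg_add_eq_of_mem_minPairs hx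
  obtain ⟨hρ, hτ, -, -⟩ := hx
  rw [← mul_assoc, (hf.2.2.1 p x.1 (hpq.trans hρ)).1, mul_assoc,
    (hf.2.2.1 b x.2 (hab.symm.trans hτ)).2]
  convert mul_ghost_mem_kpComponent (s := s) (t := t) (R := R) _ _ using 2
  rw [intDeg_comp (hpq.trans hρ), intDeg_comp (hab.symm.trans hτ)]
  linear_combination -hdeg

theorem kpComponent_mul_mem [SMulCommClass R B B] [IsScalarTower R B B] {n m : Fin k → ℤ}
    {x y : B} (hf : Λ.IsKPFamily s t)
    (hx : x ∈ kpComponent Λ R s t n) (hy : y ∈ kpComponent Λ R s t m) :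
    x * y ∈ kpComponent Λ R s t (n + m) := by
  induction hx using Submodule.span_induction with
  | mem u hu =>
    induction hy using Submodule.span_induction with
    | mem v hv =>
      obtain ⟨p, q, rfl, rfl⟩ := hu
      obtain ⟨a, b, rfl, rfl⟩ := hv
      exact mul_ghost_mul_mul_ghost_mem_kpComponent hf p q a b
    | zero => rw [mul_zero]; exact zero_mem _
    | add v w _ _ hv hw => rw [mul_add]; exact add_mem hv hw
    | smul r v _ hv => rw [mul_smul_comm]; exact Submodule.smul_mem _ _ hv
  | zero => rw [zero_mul]; exact zero_mem _
  | add u v _ _ hu hv => rw [add_mul]; exact add_mem hu hv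
  | smul r u _ hu => rw [smul_mul_assoc]; exact Submodule.smul_mem _ _ hu

theorem iSup_kpComponent_eq_top [SMulCommClass R B B] [IsScalarTower R B B]
    (hf : Λ.IsKPFamily s t) (hgen : NonUnitalAlgebra.adjoin R (Set.range s ∪ Set.range t) = ⊤) :
    ⨆ n, kpComponent Λ R s t n = ⊤ := by
  let homogeneous : Subsemigroup B :=
    { carrier := {x | ∃ n, x ∈ kpComponent Λ R s t n}
      mul_mem' := fun ⟨n, hx⟩ ⟨m, hy⟩ => ⟨n + m, kpComponent_mul_mem hf hx hy⟩ }
  have hclosure : Subsemigroup.closure (Set.range s ∪ Set.range t) ≤ homogeneous := by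
    refine Subsemigroup.closure_le.mpr ?_
    rintro _ (⟨p, rfl⟩ | ⟨q, rfl⟩)
    · exact ⟨_, hf.mul_ghost_vertex_src p ▸ mul_ghost_mem_kpComponent _ _⟩
    · exact ⟨_, hf.vertex_src_mul_ghost q ▸ mul_ghost_mem_kpComponent _ _⟩
  have hspan := NonUnitalAlgebra.adjoin_eq_span (R := R) (Set.range s ∪ Set.range t)
  rw [hgen, NonUnitalAlgebra.top_toSubmodule] at hspan
  rw [eq_top_iff, hspan, Submodule.span_le]
  intro x hx
  obtain ⟨n, hn⟩ := hclosure hx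
  exact Submodule.mem_iSup_of_mem n hn

end Grading

section GradedUnitization

variable {k : ℕ} {R : Type} [CommRing R]
  {B : Type} [NonUnitalRing B] [Module R B] [SMulCommClass R B B] [IsScalarTower R B B]

variable (R) in
/-- `b ↦ b·δₙ ∈ B⁺[ℤᵏ]`; the unitization is there because monoid algebras need unital
coefficients. -/
noncomputable def homogeneous (n : Fin k → ℤ) :
    B →ₗ[R] AddMonoidAlgebra (Unitization R B) (Fin k → ℤ) :=
  AddMonoidAlgebra.lsingle n ∘ₗ Unitization.inrHom R R B

theorem homogeneous_apply (n : Fin k → ℤ) (b : B) :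
    homogeneous R n b = AddMonoidAlgebra.single n (b : Unitization R B) :=
  rfl

theorem homogeneous_mul_homogeneous (n m : Fin k → ℤ) (a b : B) :
    homogeneous R n a * homogeneous R m b = homogeneous R (n + m) (a * b) := by
  simp only [homogeneous_apply, AddMonoidAlgebra.single_mul_single, Unitization.inr_mul]

theorem foldl_mul_map_homogeneous_zero (x : B) (L : List B) :
    (L.map (homogeneous R 0)).foldl (· * ·) (homogeneous R 0 x) =
      homogeneous R (0 : Fin k → ℤ) (L.foldl (· * ·) x) := by
  induction L generalizing x with
  | nil => rfl
  | cons y L ih =>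
    simp only [List.map_cons, List.foldl_cons, homogeneous_mul_homogeneous, add_zero, ih]

theorem coeff_sum_homogeneous (c : (Fin k → ℤ) →₀ B) (m : Fin k → ℤ) :
    (c.sum fun n x => homogeneous R n x).coeff m = c m := by
  classical
  simp only [Finsupp.sum, homogeneous_apply, AddMonoidAlgebra.coeff_sum,
    AddMonoidAlgebra.coeff_single, Finsupp.coe_finsetSum, Finset.sum_apply, Finsupp.single_apply,
    Finset.sum_ite_eq', Finsupp.mem_support_iff, ne_eq, ite_not, ite_eq_right_iff]
  intro hm
  rw [hm, Unitization.inr_zero]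

end GradedUnitization

namespace KGraph.IsKPFamily

variable {k : ℕ} {Λ : KGraph k} {R : Type} [CommRing R]
  {B : Type} [NonUnitalRing B] [Module R B] [SMulCommClass R B B] [IsScalarTower R B B]
  {s t : Λ.Path → B}

theorem graded (hΛ : Λ.FinitelyAligned) (hf : Λ.IsKPFamily s t) :
    Λ.IsKPFamily (fun p => homogeneous R (Λ.intDeg p) (s p))
      (fun q => homogeneous R (-Λ.intDeg q) (t q)) := by
  refine ⟨fun v => ?_, ⟨fun v => ?_, fun v w hvw => ?_⟩, fun p q hpq => ⟨?_, ?_⟩,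
    fun p q => ?_, fun v l hl hE => ?_⟩ <;> dsimp only
  · simp only [intDeg_vertex, neg_zero, hf.1]
  · rw [homogeneous_mul_homogeneous, hf.2.1.1, intDeg_vertex, add_zero]
  · rw [homogeneous_mul_homogeneous, hf.2.1.2 v w hvw, map_zero]
  · rw [homogeneous_mul_homogeneous, (hf.2.2.1 p q hpq).1, intDeg_comp hpq]
  · rw [homogeneous_mul_homogeneous, (hf.2.2.1 p q hpq).2, intDeg_comp hpq, neg_add_rev]
  · rw [homogeneous_mul_homogeneous, hf.2.2.2.1 p q]
    refine ((homogeneous R _).toAddMonoidHom.map_finsum_mem _ (hΛ p q)).trans <|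
      finsum_mem_congr rfl fun x hx => ?_
    rw [LinearMap.toAddMonoidHom_coe, homogeneous_mul_homogeneous]
    congr 2
    linear_combination -intDeg_add_eq_of_mem_minPairs hx
  · simp only [intDeg_vertex, homogeneous_mul_homogeneous, add_neg_cancel, ← map_sub]
    have hmap : (l.map fun p => homogeneous R (0 : Fin k → ℤ) (s (Λ.vertex v) - s p * t p)) =
        (l.map fun p => s (Λ.vertex v) - s p * t p).map (homogeneous R 0) := by
      rw [List.map_map]; rfl
    rw [hmap, foldl_mul_map_homogeneous_zero, hf.2.2.2.2 v l hl hE, map_zero]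

end KGraph.IsKPFamily

section Universal

variable {k : ℕ} {Λ : KGraph k} {R : Type} [CommRing R]
  {B : Type} [NonUnitalRing B] [Module R B] [SMulCommClass R B B] [IsScalarTower R B B]
  {s t : Λ.Path → B}

theorem eqOn_kpComponent_homogeneous
    (π : B →ₙₐ[R] AddMonoidAlgebra (Unitization R B) (Fin k → ℤ))
    (hs : ∀ p, π (s p) = homogeneous R (Λ.intDeg p) (s p))
    (ht : ∀ q, π (t q) = homogeneous R (-Λ.intDeg q) (t q)) (n : Fin k → ℤ) :
    Set.EqOn π (homogeneous R n) (kpComponent Λ R s t n) := by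
  refine LinearMap.eqOn_span' (f := LinearMapClass.linearMap π) ?_
  rintro _ ⟨p, q, rfl, rfl⟩
  change π (s p * t q) = homogeneous R (Λ.intDeg p - Λ.intDeg q) (s p * t q)
  rw [map_mul, hs, ht, homogeneous_mul_homogeneous, sub_eq_add_neg]

theorem kpComponent_decomposition_unique (hΛ : Λ.FinitelyAligned)
    (hU : Λ.IsUniversalKP R B s t) {c c' : (Fin k → ℤ) →₀ B}
    (hc : ∀ n, c n ∈ kpComponent Λ R s t n) (hc' : ∀ n, c' n ∈ kpComponent Λ R s t n)
    (h : (c.sum fun _ x => x) = c'.sum fun _ x => x) : c = c' := by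
  obtain ⟨π, ⟨hs, ht⟩, -⟩ := hU.2.2 _ _ _ (hU.1.graded (R := R) hΛ)
  have hcoeff : ∀ d : (Fin k → ℤ) →₀ B, (∀ n, d n ∈ kpComponent Λ R s t n) →
      ∀ m, (π (d.sum fun _ x => x)).coeff m = d m := by
    intro d hd m
    rw [map_finsuppSum,
      Finsupp.sum_congr fun n _ => eqOn_kpComponent_homogeneous π hs ht n (hd n),
      coeff_sum_homogeneous]
  ext m
  exact Unitization.inr_injective (by rw [← hcoeff c hc, ← hcoeff c' hc', h])

end Universal

theorem universal_kp_graded_general {k : ℕ} (Λ : KGraph k)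
    (hΛ : Λ.FinitelyAligned) (R : Type) [CommRing R]
    (B : Type) [NonUnitalRing B] [Module R B] [SMulCommClass R B B]
    [IsScalarTower R B B] (s t : Λ.Path → B)
    (hU : Λ.IsUniversalKP R B s t) :
    (∀ b : B, ∃! c : (Fin k → ℤ) →₀ B,
      (∀ n, c n ∈ kpComponent Λ R s t n) ∧ (c.sum fun _ x => x) = b) ∧
    ∀ (n m : Fin k → ℤ) (a b : B), a ∈ kpComponent Λ R s t n →
      b ∈ kpComponent Λ R s t m → a * b ∈ kpComponent Λ R s t (n + m) := by
  refine ⟨fun b => ?_, fun n m a b ha hb => kpComponent_mul_mem hU.1 ha hb⟩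
  have hb : b ∈ ⨆ n, kpComponent Λ R s t n := by
    rw [iSup_kpComponent_eq_top hU.1 hU.2.1]
    trivial
  obtain ⟨c, hc, rfl⟩ := (Submodule.mem_iSup_iff_exists_finsupp _ b).mp hb
  exact ⟨c, ⟨hc, rfl⟩, fun c' hc' => kpComponent_decomposition_unique hΛ hU hc'.1 hc hc'.2⟩

/-- the components `KP_R(Λ)_n` form a `ℤᵏ`-grading of `KP_R(Λ)`:
every element has a unique decomposition into homogeneous components, and the
components multiply into the correct component. -/
theorem universal_kp_graded {k : ℕ} (hk : 0 < k) (Λ : KGraph k)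
    (hΛ : Λ.FinitelyAligned) (R : Type) [CommRing R]
    (B : Type) [NonUnitalRing B] [Module R B] [SMulCommClass R B B]
    [IsScalarTower R B B] (s t : Λ.Path → B)
    (hU : Λ.IsUniversalKP R B s t) :
    (∀ b : B, ∃! c : (Fin k → ℤ) →₀ B,
      (∀ n, c n ∈ kpComponent Λ R s t n) ∧ (c.sum fun _ x => x) = b) ∧
    ∀ (n m : Fin k → ℤ) (a b : B), a ∈ kpComponent Λ R s t n →
      b ∈ kpComponent Λ R s t m → a * b ∈ kpComponent Λ R s t (n + m) :=
  universal_kp_graded_general Λ hΛ R B s t hU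
end
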